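/- arXiv:0709.1062 — 7 statements merged into one kernel-verified Lean document; each statement's English description precedes it below -/
import Mathlib

section
/- Let $V$ be a topological vector space and $C \subseteq V$ a nonempty closed convex set. Then $\lim(C) = \{v \in V : v = \lim_{n} t_n c_n \text{ for some } c_n \in C,\ t_n \geq 0,\ t_n \to 0\}$, where $\lim(C) = \{v : C + v \subseteq C\}$ is the recession cone. -/
open Filter Topology

/-
A recession direction `v` of `C` gives the ray `c₀ + n • v ⊆ C`, and
`(n + 1)⁻¹ • (c₀ + n • v) = v + (n + 1)⁻¹ • (c₀ - v) → v`.
Conversely, if `tₙ • cₙ → v` with `tₙ → 0`, then for `x ∈ C` the convex combinations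
`(1 - tₙ) • x + tₙ • cₙ ∈ C` converge to `x + v`, which therefore lies in the closed set `C`.
-/

section Recession

variable {V : Type*} [AddCommGroup V] [Module ℝ V] [TopologicalSpace V]

theorem add_nsmul_mem_of_forall_add_mem {M : Type*} [AddMonoid M] {C : Set M} {v c : M}
    (hv : ∀ x ∈ C, x + v ∈ C) (hc : c ∈ C) (n : ℕ) : c + n • v ∈ C := by
  induction n with
  | zero => simpa using hc
  | succ n ih => simpa [succ_nsmul, ← add_assoc] using hv _ ih

theorem tendsto_one_div_succ_smul_add_nsmul [IsTopologicalAddGroup V] [ContinuousSMul ℝ V]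
    (c v : V) :
    Tendsto (fun n : ℕ => (1 / ((n : ℝ) + 1)) • (c + n • v)) atTop (𝓝 v) := by
  have hrewrite : ∀ n : ℕ,
      (1 / ((n : ℝ) + 1)) • (c + n • v) = v + (1 / ((n : ℝ) + 1)) • (c - v) := by
    intro n
    have hn : (n : ℝ) + 1 ≠ 0 := by positivity
    rw [← Nat.cast_smul_eq_nsmul ℝ]
    match_scalars <;> field_simp
    ring
  have hsmul : Tendsto (fun n : ℕ => (1 / ((n : ℝ) + 1)) • (c - v)) atTop (𝓝 0) := by
    simpa using (tendsto_one_div_add_atTop_nhds_zero_nat (𝕜 := ℝ)).smul_const (c - v)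
  simpa only [hrewrite, add_zero] using tendsto_const_nhds (x := v) |>.add hsmul

theorem add_mem_of_tendsto_smul [IsTopologicalAddGroup V] [ContinuousSMul ℝ V]
    {ι : Type*} {l : Filter ι} [l.NeBot] {C : Set V} (hcl : IsClosed C) (hconv : Convex ℝ C)
    {c : ι → V} {t : ι → ℝ} {v x : V} (hc : ∀ i, c i ∈ C) (ht : ∀ i, 0 ≤ t i)
    (ht0 : Tendsto t l (𝓝 0)) (hv : Tendsto (fun i => t i • c i) l (𝓝 v)) (hx : x ∈ C) :
    x + v ∈ C := by
  have hlim : Tendsto (fun i => (1 - t i) • x + t i • c i) l (𝓝 (x + v)) := by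
    simpa using ((tendsto_const_nhds (x := (1 : ℝ)).sub ht0).smul_const x).add hv
  refine hcl.mem_of_tendsto hlim ?_
  filter_upwards [ht0.eventually_le_const one_pos] with i hti
  exact hconv hx (hc i) (by linarith) (ht i) (by ring)

end Recession

/-- Characterization of the recession cone of a nonempty closed convex set `C`:
`v ∈ lim(C)` iff `v = lim tₙ cₙ` for some `cₙ ∈ C`, `tₙ ≥ 0`, `tₙ → 0`. -/
theorem stmt_1 {V : Type*} [AddCommGroup V] [Module ℝ V] [TopologicalSpace V]
    [IsTopologicalAddGroup V] [ContinuousSMul ℝ V]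
    (C : Set V) (hne : C.Nonempty) (hcl : IsClosed C) (hconv : Convex ℝ C) :
    {v : V | ∀ c ∈ C, c + v ∈ C} =
      {v : V | ∃ (c : ℕ → V) (t : ℕ → ℝ), (∀ n, c n ∈ C) ∧ (∀ n, 0 ≤ t n) ∧
        Tendsto t atTop (𝓝 0) ∧ Tendsto (fun n => t n • c n) atTop (𝓝 v)} := by
  ext v
  constructor
  · intro hv
    obtain ⟨c₀, hc₀⟩ := hne
    exact ⟨fun n => c₀ + n • v, fun n => 1 / ((n : ℝ) + 1),
      add_nsmul_mem_of_forall_add_mem hv hc₀, fun n => by positivity,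
      tendsto_one_div_add_atTop_nhds_zero_nat,
      tendsto_one_div_succ_smul_add_nsmul c₀ v⟩
  · rintro ⟨c, t, hc, ht, ht0, hv⟩ x hx
    exact add_mem_of_tendsto_smul hcl hconv hc ht ht0 hv hx
end

section
/- Let $V$ be a locally convex space and $C \subseteq V'$ a nonempty weak-*-closed convex set. Then the dual cone of $B(C) = \{v \in V : \inf \langle C, v\rangle > -\infty\}$, namely $B(C)^\star = \{\alpha \in V' : \alpha(v) \geq 0 \text{ for all } v \in B(C)\}$, equals the recession cone $\lim(C) = \{\alpha \in V' : C + \alpha \subseteq C\}$. -/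
/-!
A functional `f` bounded below on `C` cannot decrease along a recession direction `α`:
`f (β + n • α) = f β + n * f α` stays bounded below as `n → ∞`, so `0 ≤ f α`.
Conversely, if `β + α ∉ C` for some `β ∈ C`, Hahn–Banach separation of `β + α` from the closed
convex set `C` yields a continuous functional bounded below on `C` and negative at `α`.
On the weak-* dual every continuous functional is evaluation at a point of `V`, so these
functionals are exactly the points of `B(C)`.
-/

def recessionCone {E : Type*} [Add E] (C : Set E) : Set E :=
  {α | ∀ β ∈ C, β + α ∈ C}

section RecessionCone

variable {E : Type*}

lemma add_nsmul_mem_of_mem_recessionCone [AddMonoid E] {C : Set E} {α β : E}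
    (hα : α ∈ recessionCone C) (hβ : β ∈ C) (n : ℕ) : β + n • α ∈ C := by
  induction n with
  | zero => simpa using hβ
  | succ n ih => simpa [succ_nsmul, add_assoc] using hα _ ih

lemma nonneg_of_mem_recessionCone_of_bddBelow [AddMonoid E] {C : Set E} (hne : C.Nonempty)
    {α : E} (hα : α ∈ recessionCone C) (f : E →+ ℝ) (hf : BddBelow (f '' C)) : 0 ≤ f α := by
  obtain ⟨β, hβ⟩ := hne
  obtain ⟨m, hm⟩ := hf
  have hbound (n : ℕ) : m ≤ f β + n * f α := by
    simpa using hm ⟨_, add_nsmul_mem_of_mem_recessionCone hα hβ n, rfl⟩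
  by_contra! hneg
  obtain ⟨n, hn⟩ := exists_nat_gt ((f β - m) / -f α)
  rw [div_lt_iff₀ (neg_pos.mpr hneg)] at hn
  linarith [hbound n]

variable [AddCommGroup E] [Module ℝ E] [TopologicalSpace E] [IsTopologicalAddGroup E]
  [ContinuousSMul ℝ E] [LocallyConvexSpace ℝ E]

lemma exists_bddBelow_neg_of_notMem_recessionCone {C : Set E} (hcl : IsClosed C)
    (hconv : Convex ℝ C) {α : E} (hα : α ∉ recessionCone C) :
    ∃ f : StrongDual ℝ E, BddBelow (f '' C) ∧ f α < 0 := by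
  obtain ⟨β, hβ, hβα⟩ : ∃ β ∈ C, β + α ∉ C := by simpa [recessionCone] using hα
  obtain ⟨f, u, hfβα, hfC⟩ := geometric_hahn_banach_point_closed hconv hcl hβα
  refine ⟨f, ⟨u, Set.forall_mem_image.mpr fun γ hγ ↦ (hfC γ hγ).le⟩, ?_⟩
  linarith [hfC β hβ, map_add f β α]

theorem mem_recessionCone_iff_forall_bddBelow {C : Set E} (hne : C.Nonempty) (hcl : IsClosed C)
    (hconv : Convex ℝ C) {α : E} :
    α ∈ recessionCone C ↔ ∀ f : StrongDual ℝ E, BddBelow (f '' C) → 0 ≤ f α := by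
  refine ⟨fun hα f ↦ nonneg_of_mem_recessionCone_of_bddBelow hne hα f.toLinearMap.toAddMonoidHom,
    fun h ↦ ?_⟩
  by_contra hα
  obtain ⟨f, hf, hfα⟩ := exists_bddBelow_neg_of_notMem_recessionCone hcl hconv hα
  exact (h f hf).not_gt hfα

end RecessionCone

instance WeakDual.instLocallyConvexSpace {V : Type*} [AddCommGroup V] [Module ℝ V]
    [TopologicalSpace V] : LocallyConvexSpace ℝ (WeakDual ℝ V) :=
  WeakBilin.locallyConvexSpace

lemma WeakDual.exists_eq_eval {𝕜 V : Type*} [NontriviallyNormedField 𝕜] [AddCommGroup V]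
    [Module 𝕜 V] [TopologicalSpace V] (f : StrongDual 𝕜 (WeakDual 𝕜 V)) :
    ∃ v : V, ∀ β : WeakDual 𝕜 V, f β = β v := by
  obtain ⟨v, rfl⟩ := LinearMap.dualEmbedding_surjective (topDualPairing 𝕜 V) f
  exact ⟨v, fun _ ↦ rfl⟩

theorem stmt_5_general {V : Type*} [AddCommGroup V] [Module ℝ V] [TopologicalSpace V]
    (C : Set (WeakDual ℝ V)) (hne : C.Nonempty) (hcl : IsClosed C) (hconv : Convex ℝ C) :
    {α : WeakDual ℝ V |
        ∀ v ∈ {v : V | BddBelow ((fun β : WeakDual ℝ V => β v) '' C)}, 0 ≤ α v} =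
      {α : WeakDual ℝ V | ∀ β ∈ C, β + α ∈ C} := by
  ext α
  change _ ↔ α ∈ recessionCone C
  rw [mem_recessionCone_iff_forall_bddBelow hne hcl hconv]
  constructor
  · intro h f hf
    obtain ⟨v, hv⟩ := WeakDual.exists_eq_eval f
    simp only [hv] at hf ⊢
    exact h v hf
  · exact fun h v hv ↦ h (WeakBilin.eval (topDualPairing ℝ V) v) hv

/-- For a nonempty weak-*-closed convex set `C ⊆ V'`, the dual cone of
`B(C) = {v | inf ⟨C, v⟩ > -∞}` equals the recession cone `lim(C)`. -/
theorem stmt_5 {V : Type*} [AddCommGroup V] [Module ℝ V] [TopologicalSpace V]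
    [IsTopologicalAddGroup V] [ContinuousSMul ℝ V] [LocallyConvexSpace ℝ V]
    (C : Set (WeakDual ℝ V)) (hne : C.Nonempty) (hcl : IsClosed C) (hconv : Convex ℝ C) :
    {α : WeakDual ℝ V |
        ∀ v ∈ {v : V | BddBelow ((fun β : WeakDual ℝ V => β v) '' C)}, 0 ≤ α v} =
      {α : WeakDual ℝ V | ∀ β ∈ C, β + α ∈ C} :=
  stmt_5_general C hne hcl hconv
end

section
/- Let $V$ be a locally convex space and $C \subseteq V'$ a weak-*-closed convex subset such that the cone $B(C) = \{v : \inf \langle C, v\rangle > -\infty\}$ has nonempty interior. Then $C = \{\alpha \in V' : \alpha(x) \geq \inf\langle C, x\rangle \text{ for all } x \in B(C)^0\}$, where $B(C)^0$ denotes the interior of $B(C)$. -/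
/-!
If `α ∉ C`, Hahn–Banach separation in the locally convex space `V'` (weak-*) yields a
point `x ∈ B(C)` with `α x < inf ⟨C, x⟩`, since every weak-* continuous functional is an
evaluation. The support function `x ↦ inf ⟨C, x⟩` is concave on the convex set `B(C)`, so
along the segment from an interior point `x₀` to `x` it dominates the chord; the inequality
`inf ⟨C, ·⟩ ≤ α` on `B(C)⁰` therefore passes to the endpoint `x` as `t → 1⁻`.
-/

open Filter Set Topology

section ConcaveOn

variable {E : Type*} [AddCommGroup E] [Module ℝ E] [TopologicalSpace E]
  [IsTopologicalAddGroup E] [ContinuousConstSMul ℝ E]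

theorem ConcaveOn.le_of_forall_mem_interior_le {s : Set E} {f : E → ℝ} (hf : ConcaveOn ℝ s f)
    (g : E →ₗ[ℝ] ℝ) {x₀ x : E} (hx₀ : x₀ ∈ interior s) (hle : ∀ y ∈ interior s, f y ≤ g y)
    (hx : x ∈ s) : f x ≤ g x := by
  have hchord : ∀ t ∈ Ioo (0 : ℝ) 1,
      0 ≤ (1 - t) * (g x₀ - f x₀) + t * (g x - f x) := by
    rintro t ⟨ht0, ht1⟩
    have hy : (1 - t) • x₀ + t • x ∈ interior s :=
      hf.1.combo_interior_self_mem_interior hx₀ hx (by linarith) ht0.le (by ring)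
    have hconc : (1 - t) * f x₀ + t * f x ≤ f ((1 - t) • x₀ + t • x) :=
      hf.2 (interior_subset hx₀) hx (by linarith) ht0.le (by ring)
    have hg : g ((1 - t) • x₀ + t • x) = (1 - t) * g x₀ + t * g x := by simp
    linarith [hle _ hy]
  have hlim : Tendsto (fun t : ℝ => (1 - t) * (g x₀ - f x₀) + t * (g x - f x)) (𝓝[<] 1)
      (𝓝 (g x - f x)) := by
    have : Continuous fun t : ℝ => (1 - t) * (g x₀ - f x₀) + t * (g x - f x) := by fun_prop
    simpa using this.continuousWithinAt.tendsto (x := 1) (s := Iio 1)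
  have := ge_of_tendsto hlim (eventually_of_mem (Ioo_mem_nhdsLT zero_lt_one) hchord)
  linarith

end ConcaveOn

namespace WeakDual

variable {V : Type*} [AddCommGroup V] [Module ℝ V] [TopologicalSpace V]

def bddBelowCone (C : Set (WeakDual ℝ V)) : Set V :=
  {v : V | BddBelow ((fun β : WeakDual ℝ V => β v) '' C)}

theorem convex_bddBelowCone (C : Set (WeakDual ℝ V)) : Convex ℝ (bddBelowCone C) := by
  rintro u ⟨m, hm⟩ w ⟨n, hn⟩ a b ha hb -
  refine ⟨a * m + b * n, ?_⟩
  rintro _ ⟨β, hβ, rfl⟩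
  have hu : m ≤ β u := hm ⟨β, hβ, rfl⟩
  have hw : n ≤ β w := hn ⟨β, hβ, rfl⟩
  simp only [map_add, map_smul, smul_eq_mul]
  nlinarith

theorem concaveOn_sInf_image_eval {C : Set (WeakDual ℝ V)} (hne : C.Nonempty) :
    ConcaveOn ℝ (bddBelowCone C) fun x => sInf ((fun β : WeakDual ℝ V => β x) '' C) := by
  refine ⟨convex_bddBelowCone C, fun u hu w hw a b ha hb _ => ?_⟩
  refine le_csInf (hne.image _) ?_
  rintro _ ⟨β, hβ, rfl⟩
  have hu' := csInf_le hu ⟨β, hβ, rfl⟩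
  have hw' := csInf_le hw ⟨β, hβ, rfl⟩
  simp only [map_add, map_smul, smul_eq_mul]
  nlinarith

theorem exists_lt_sInf_image_eval_of_notMem {C : Set (WeakDual ℝ V)} (hne : C.Nonempty)
    (hcl : IsClosed C) (hconv : Convex ℝ C) {α : WeakDual ℝ V} (hα : α ∉ C) :
    ∃ x ∈ bddBelowCone C, α x < sInf ((fun β : WeakDual ℝ V => β x) '' C) := by
  have : LocallyConvexSpace ℝ (WeakDual ℝ V) := WeakBilin.locallyConvexSpace
  obtain ⟨f, u, hfC, hfα⟩ := geometric_hahn_banach_closed_point hconv hcl hα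
  obtain ⟨w, rfl⟩ := LinearMap.dualEmbedding_surjective (topDualPairing ℝ V) f
  have hlow : -u ∈ lowerBounds ((fun β : WeakDual ℝ V => β (-w)) '' C) := by
    rintro _ ⟨β, hβ, rfl⟩
    have : β w < u := hfC β hβ
    show -u ≤ β (-w)
    rw [map_neg]
    linarith
  have hlt : α (-w) < -u := by
    have : u < α w := hfα
    rw [map_neg]
    linarith
  exact ⟨-w, ⟨-u, hlow⟩, hlt.trans_le (le_csInf (hne.image _) hlow)⟩

end WeakDual

open WeakDual in
theorem stmt_7_general {V : Type*} [AddCommGroup V] [Module ℝ V] [TopologicalSpace V]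
    [IsTopologicalAddGroup V] [ContinuousSMul ℝ V]
    (C : Set (WeakDual ℝ V)) (hne : C.Nonempty) (hcl : IsClosed C) (hconv : Convex ℝ C)
    (hint : (interior {v : V | BddBelow ((fun β : WeakDual ℝ V => β v) '' C)}).Nonempty) :
    C = {α : WeakDual ℝ V |
          ∀ x ∈ interior {v : V | BddBelow ((fun β : WeakDual ℝ V => β v) '' C)},
            sInf ((fun β : WeakDual ℝ V => β x) '' C) ≤ α x} := by
  refine Subset.antisymm
    (fun α hα x hx => csInf_le (interior_subset hx : x ∈ bddBelowCone C) ⟨α, hα, rfl⟩) ?_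
  intro α hα
  by_contra hαC
  obtain ⟨x₀, hx₀⟩ := hint
  obtain ⟨x, hx, hlt⟩ := exists_lt_sInf_image_eval_of_notMem hne hcl hconv hαC
  exact hlt.not_ge <|
    (concaveOn_sInf_image_eval hne).le_of_forall_mem_interior_le (α : V →ₗ[ℝ] ℝ) hx₀ hα hx

/-- If the cone `B(C)` of a nonempty weak-*-closed convex set `C ⊆ V'` has
nonempty interior, then `C` is recovered from its support function on the
interior `B(C)⁰`. -/
theorem stmt_7 {V : Type*} [AddCommGroup V] [Module ℝ V] [TopologicalSpace V]
    [IsTopologicalAddGroup V] [ContinuousSMul ℝ V] [LocallyConvexSpace ℝ V]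
    (C : Set (WeakDual ℝ V)) (hne : C.Nonempty) (hcl : IsClosed C) (hconv : Convex ℝ C)
    (hint : (interior {v : V | BddBelow ((fun β : WeakDual ℝ V => β v) '' C)}).Nonempty) :
    C = {α : WeakDual ℝ V |
          ∀ x ∈ interior {v : V | BddBelow ((fun β : WeakDual ℝ V => β v) '' C)},
            sInf ((fun β : WeakDual ℝ V => β x) '' C) ≤ α x} :=
  stmt_7_general C hne hcl hconv hint
end

section
/- Let $V$ be a barrelled locally convex space, $\Omega \subseteq V$ an open convex set, and $f : \Omega \to \mathbb{R}$ a lower semicontinuous convex function. Then $f$ is continuous. -/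
/-!
Fix `x₀ ∈ Ω` and let `B` be the set of `v` with `x₀ ± v ∈ Ω` and `f (x₀ ± v) ≤ f x₀ + 1`. It is
convex and symmetric, and absorbent because a convex function of one real variable is continuous.
Lower semicontinuity and convexity give `½ • closure B ⊆ B`. As `closure B` is a barrel, it is a
neighbourhood of `0`, hence so is `B`: `f` is bounded above near `x₀`, and a convex function that
is bounded above near a point is continuous there.
-/

open Set Filter Topology Pointwise

theorem LowerSemicontinuousOn.le_of_mem_closure_sep {α γ : Type*} [TopologicalSpace α]
    [LinearOrder γ] {s : Set α} {f : α → γ} {x : α} {c : γ}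
    (hf : LowerSemicontinuousOn f s) (hs : IsOpen s) (hx : x ∈ s)
    (hcl : x ∈ closure {y ∈ s | f y ≤ c}) : f x ≤ c := by
  by_contra! hlt
  have hnear : ∀ᶠ y in 𝓝 x, c < f y := hs.nhdsWithin_eq hx ▸ hf x hx c hlt
  obtain ⟨y, hcy, -, hyc⟩ := (hnear.and_frequently (mem_closure_iff_frequently.1 hcl)).exists
  exact hcy.not_ge hyc

theorem BarrelledSpace.mem_nhds_zero_of_isClosed {V : Type*} [AddCommGroup V] [Module ℝ V]
    [TopologicalSpace V] [ContinuousConstSMul ℝ V] [BarrelledSpace ℝ V] {C : Set V}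
    (hC : IsClosed C) (hconv : Convex ℝ C) (hbal : Balanced ℝ C) (habs : Absorbent ℝ C) :
    C ∈ 𝓝 0 := by
  have hC₀ : (0 : V) ∈ C := habs.zero_mem
  have hlsc : LowerSemicontinuous (gauge C) := by
    refine lowerSemicontinuous_iff_isClosed_preimage.2 fun a ↦ ?_
    rcases lt_or_ge a 0 with ha | ha
    · convert isClosed_empty
      exact eq_empty_of_forall_notMem fun x hx ↦ ha.not_ge ((gauge_nonneg x).trans hx)
    · change IsClosed {x | gauge C x ≤ a}
      rw [setOfPred_gauge_le_eq hconv hC₀ habs ha]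
      exact isClosed_biInter fun r hr ↦ hC.smul_of_ne_zero (ha.trans_lt hr).ne'
  have hcont := (gaugeSeminorm hbal hconv habs).continuous_of_lowerSemicontinuous hlsc
  refine mem_of_superset (Seminorm.ball_mem_nhds hcont one_pos) fun x hx ↦ ?_
  rw [Seminorm.mem_ball, sub_zero] at hx
  exact setOfPred_gauge_lt_one_subset_self hconv hC₀ habs hx

section ConvexOn

variable {V : Type*} [AddCommGroup V] [Module ℝ V] {Ω : Set V} {f : V → ℝ}

theorem ConvexOn.apply_add_smul_le {x w : V} {t : ℝ} (hf : ConvexOn ℝ Ω f) (hx : x ∈ Ω)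
    (hxw : x + w ∈ Ω) (ht₀ : 0 ≤ t) (ht₁ : t ≤ 1) :
    f (x + t • w) ≤ f x + t * (f (x + w) - f x) := by
  have h := hf.2 hx hxw (sub_nonneg.2 ht₁) ht₀ (sub_add_cancel 1 t)
  rw [show (1 - t) • x + t • (x + w) = x + t • w by module, smul_eq_mul, smul_eq_mul] at h
  linarith

theorem ConvexOn.abs_apply_add_smul_sub_le {x w : V} {M t : ℝ} (hf : ConvexOn ℝ Ω f)
    (hx : x ∈ Ω) (hxp : x + w ∈ Ω) (hxm : x - w ∈ Ω) (hfp : f (x + w) ≤ M)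
    (hfm : f (x - w) ≤ M) (ht₀ : 0 ≤ t) (ht₁ : t ≤ 1) :
    |f (x + t • w) - f x| ≤ t * (M - f x) := by
  rw [sub_eq_add_neg] at hxm hfm
  have hupp := hf.apply_add_smul_le hx hxp ht₀ ht₁
  have hupm := hf.apply_add_smul_le hx hxm ht₀ ht₁
  have hmid := hf.2 (hf.1.add_smul_mem hx hxp ⟨ht₀, ht₁⟩) (hf.1.add_smul_mem hx hxm ⟨ht₀, ht₁⟩)
    (by norm_num : (0 : ℝ) ≤ 2⁻¹) (by norm_num : (0 : ℝ) ≤ 2⁻¹) (by norm_num)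
  rw [show (2⁻¹ : ℝ) • (x + t • w) + (2⁻¹ : ℝ) • (x + t • -w) = x by module,
    smul_eq_mul, smul_eq_mul] at hmid
  rw [abs_le]
  constructor <;> nlinarith

variable [TopologicalSpace V] [IsTopologicalAddGroup V] [ContinuousSMul ℝ V]

theorem ConvexOn.continuousAt_of_eventually_le {x₀ : V} {M : ℝ} (hf : ConvexOn ℝ Ω f)
    (hΩ : Ω ∈ 𝓝 x₀) (hM : ∀ᶠ y in 𝓝 x₀, f y ≤ M) : ContinuousAt f x₀ := by
  have hx₀ : x₀ ∈ Ω := mem_of_mem_nhds hΩ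
  have hfx₀ : f x₀ ≤ M := hM.self_of_nhds
  have hnear : ∀ᶠ y in 𝓝 x₀, y ∈ Ω ∧ f y ≤ M := (show ∀ᶠ y in 𝓝 x₀, y ∈ Ω from hΩ).and hM
  have hsymm : ∀ᶠ w in 𝓝 (0 : V),
      (x₀ + w ∈ Ω ∧ f (x₀ + w) ≤ M) ∧ (x₀ - w ∈ Ω ∧ f (x₀ - w) ≤ M) := by
    refine (Tendsto.eventually ?_ hnear).and (Tendsto.eventually ?_ hnear)
    · simpa using (tendsto_id (x := 𝓝 (0 : V))).const_add x₀
    · simpa using (tendsto_id (x := 𝓝 (0 : V))).const_sub x₀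
  rw [ContinuousAt, ← map_add_left_nhds_zero x₀, tendsto_map'_iff, Metric.tendsto_nhds]
  intro ε hε
  obtain ⟨c, hc, hcM⟩ := exists_pos_mul_lt hε (M - f x₀)
  set t := min c 1
  have ht : 0 < t := lt_min hc one_pos
  have htM : t * (M - f x₀) < ε := by nlinarith [min_le_left c 1]
  have hshrink : Tendsto (fun v : V ↦ t⁻¹ • v) (𝓝 0) (𝓝 0) := by
    simpa using (tendsto_id (x := 𝓝 (0 : V))).const_smul t⁻¹
  filter_upwards [hshrink.eventually hsymm] with v ⟨⟨hp, hfp⟩, hm, hfm⟩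
  have hclose := hf.abs_apply_add_smul_sub_le hx₀ hp hm hfp hfm ht.le (min_le_right c 1)
  rw [smul_inv_smul₀ ht.ne'] at hclose
  rw [Real.dist_eq]
  exact hclose.trans_lt htM

theorem ConvexOn.continuousAt_add_smul (hΩ : IsOpen Ω) (hf : ConvexOn ℝ Ω f) {x : V}
    (hx : x ∈ Ω) (v : V) : ContinuousAt (fun t : ℝ ↦ f (x + t • v)) 0 := by
  have hline := (hf.translate_right x).comp_linearMap (LinearMap.toSpanSingleton ℝ V v)
  have hopen : IsOpen ((fun t : ℝ ↦ x + t • v) ⁻¹' Ω) := hΩ.preimage (by fun_prop)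
  exact (hline.continuousOn hopen).continuousAt (hopen.mem_nhds (by simpa using hx))

theorem ConvexOn.combo_mem_sep_of_mem_closure {x y : V} {r a b : ℝ} (hΩ : IsOpen Ω)
    (hf : ConvexOn ℝ Ω f) (hlsc : LowerSemicontinuousOn f Ω) (hx : x ∈ Ω)
    (hy : y ∈ closure {z ∈ Ω | f z ≤ r})
    (ha : 0 < a) (hb : 0 ≤ b) (hab : a + b = 1) :
    a • x + b • y ∈ {z ∈ Ω | f z ≤ a * f x + b * r} := by
  have hmem : a • x + b • y ∈ Ω := by
    have := hf.1.combo_interior_closure_mem_interior (hΩ.interior_eq ▸ hx)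
      (closure_mono (sep_subset _ _) hy) ha hb hab
    rwa [hΩ.interior_eq] at this
  have hmaps : MapsTo (fun z ↦ a • x + b • z) {z ∈ Ω | f z ≤ r}
      {z ∈ Ω | f z ≤ a * f x + b * r} := by
    rintro z ⟨hz, hzr⟩
    refine ⟨hf.1 hx hz ha.le hb hab, (hf.2 hx hz ha.le hb hab).trans ?_⟩
    rw [smul_eq_mul, smul_eq_mul]
    gcongr
  exact ⟨hmem, hlsc.le_of_mem_closure_sep hΩ hmem (map_mem_closure (by fun_prop) hy hmaps :)⟩

end ConvexOn

section Barrel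

variable {V : Type*} [AddCommGroup V] [Module ℝ V] {Ω : Set V} {f : V → ℝ} {x₀ : V}

def shiftedSublevel (Ω : Set V) (f : V → ℝ) (x₀ : V) : Set V :=
  (x₀ + ·) ⁻¹' {y ∈ Ω | f y ≤ f x₀ + 1}

/-- The set `B = {v | x₀ ± v ∈ Ω, f (x₀ ± v) ≤ f x₀ + 1}`; its closure is a barrel. -/
def symmSublevel (Ω : Set V) (f : V → ℝ) (x₀ : V) : Set V :=
  shiftedSublevel Ω f x₀ ∩ -shiftedSublevel Ω f x₀

theorem convex_shiftedSublevel (hf : ConvexOn ℝ Ω f) : Convex ℝ (shiftedSublevel Ω f x₀) :=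
  (hf.convex_le _).translate_preimage_right x₀

theorem convex_symmSublevel (hf : ConvexOn ℝ Ω f) : Convex ℝ (symmSublevel Ω f x₀) :=
  (convex_shiftedSublevel hf).inter (convex_shiftedSublevel hf).neg

theorem balanced_symmSublevel (hf : ConvexOn ℝ Ω f) : Balanced ℝ (symmSublevel Ω f x₀) :=
  (balanced_iff_neg_mem (convex_symmSublevel hf)).2 fun _ hv ↦ ⟨hv.2, neg_mem_neg.2 hv.1⟩

variable [TopologicalSpace V] [IsTopologicalAddGroup V] [ContinuousSMul ℝ V]

theorem eventually_smul_mem_shiftedSublevel (hΩ : IsOpen Ω) (hf : ConvexOn ℝ Ω f)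
    (hx₀ : x₀ ∈ Ω) (v : V) : ∀ᶠ t : ℝ in 𝓝 0, t • v ∈ shiftedSublevel Ω f x₀ := by
  have hline : ∀ᶠ t : ℝ in 𝓝 0, x₀ + t • v ∈ Ω :=
    (hΩ.preimage (by fun_prop)).mem_nhds (by simpa using hx₀)
  have hbound : ∀ᶠ t : ℝ in 𝓝 0, f (x₀ + t • v) < f x₀ + 1 :=
    (hf.continuousAt_add_smul hΩ hx₀ v).eventually_lt_const (by simp)
  filter_upwards [hline, hbound] with t ht hft using ⟨ht, hft.le⟩

theorem absorbent_symmSublevel (hΩ : IsOpen Ω) (hf : ConvexOn ℝ Ω f) (hx₀ : x₀ ∈ Ω) :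
    Absorbent ℝ (symmSublevel Ω f x₀) := by
  refine absorbent_iff_eventually_nhdsNE_zero.2 fun v ↦
    Eventually.filter_mono nhdsWithin_le_nhds ?_
  filter_upwards [eventually_smul_mem_shiftedSublevel hΩ hf hx₀ v,
    eventually_smul_mem_shiftedSublevel hΩ hf hx₀ (-v)] with t hp hm
  exact ⟨hp, by rwa [Set.mem_neg, ← smul_neg]⟩

theorem half_smul_mem_shiftedSublevel (hΩ : IsOpen Ω) (hf : ConvexOn ℝ Ω f)
    (hlsc : LowerSemicontinuousOn f Ω) (hx₀ : x₀ ∈ Ω) {w : V}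
    (hw : w ∈ closure (shiftedSublevel Ω f x₀)) : (2⁻¹ : ℝ) • w ∈ shiftedSublevel Ω f x₀ := by
  have hshift : x₀ + w ∈ closure {y ∈ Ω | f y ≤ f x₀ + 1} :=
    map_mem_closure (by fun_prop) hw fun _ hv ↦ hv
  obtain ⟨hmem, hle⟩ := hf.combo_mem_sep_of_mem_closure (a := 2⁻¹) (b := 2⁻¹) hΩ hlsc hx₀
    hshift (by norm_num) (by norm_num) (by norm_num)
  rw [show (2⁻¹ : ℝ) • x₀ + (2⁻¹ : ℝ) • (x₀ + w) = x₀ + (2⁻¹ : ℝ) • w by module] at hmem hle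
  exact ⟨hmem, by linarith⟩

theorem half_smul_closure_symmSublevel_subset (hΩ : IsOpen Ω) (hf : ConvexOn ℝ Ω f)
    (hlsc : LowerSemicontinuousOn f Ω) (hx₀ : x₀ ∈ Ω) :
    (2⁻¹ : ℝ) • closure (symmSublevel Ω f x₀) ⊆ symmSublevel Ω f x₀ := by
  rintro _ ⟨w, hw, rfl⟩
  have hw' : -w ∈ closure (symmSublevel Ω f x₀) :=
    (balanced_symmSublevel hf).closure.neg_mem_iff.2 hw
  have hsub := closure_mono (inter_subset_left : symmSublevel Ω f x₀ ⊆ shiftedSublevel Ω f x₀)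
  refine ⟨half_smul_mem_shiftedSublevel hΩ hf hlsc hx₀ (hsub hw), ?_⟩
  rw [Set.mem_neg, ← smul_neg]
  exact half_smul_mem_shiftedSublevel hΩ hf hlsc hx₀ (hsub hw')

theorem symmSublevel_mem_nhds_zero [BarrelledSpace ℝ V] (hΩ : IsOpen Ω) (hf : ConvexOn ℝ Ω f)
    (hlsc : LowerSemicontinuousOn f Ω) (hx₀ : x₀ ∈ Ω) : symmSublevel Ω f x₀ ∈ 𝓝 0 := by
  have hbarrel : closure (symmSublevel Ω f x₀) ∈ 𝓝 0 :=
    BarrelledSpace.mem_nhds_zero_of_isClosed isClosed_closure (convex_symmSublevel hf).closure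
      (balanced_symmSublevel hf).closure ((absorbent_symmSublevel hΩ hf hx₀).mono subset_closure)
  exact mem_of_superset ((set_smul_mem_nhds_zero_iff (by norm_num)).2 hbarrel)
    (half_smul_closure_symmSublevel_subset hΩ hf hlsc hx₀)

end Barrel

theorem stmt_10_general {V : Type*} [AddCommGroup V] [Module ℝ V] [TopologicalSpace V]
    [IsTopologicalAddGroup V] [ContinuousSMul ℝ V]
    [BarrelledSpace ℝ V]
    (Ω : Set V) (hΩ : IsOpen Ω)
    (f : V → ℝ) (hconv : ConvexOn ℝ Ω f) (hlsc : LowerSemicontinuousOn f Ω) :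
    ContinuousOn f Ω := by
  intro x₀ hx₀
  refine (hconv.continuousAt_of_eventually_le (M := f x₀ + 1) (hΩ.mem_nhds hx₀) ?_)
    |>.continuousWithinAt
  rw [← map_add_left_nhds_zero x₀, eventually_map]
  filter_upwards [symmSublevel_mem_nhds_zero hΩ hconv hlsc hx₀] with v hv using hv.1.2

/-- On a barrelled locally convex space, every lower semicontinuous convex
function on an open convex set is continuous. -/
theorem stmt_10 {V : Type*} [AddCommGroup V] [Module ℝ V] [TopologicalSpace V]
    [IsTopologicalAddGroup V] [ContinuousSMul ℝ V] [LocallyConvexSpace ℝ V]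
    [BarrelledSpace ℝ V]
    (Ω : Set V) (hΩ : IsOpen Ω) (hΩconv : Convex ℝ Ω)
    (f : V → ℝ) (hconv : ConvexOn ℝ Ω f) (hlsc : LowerSemicontinuousOn f Ω) :
    ContinuousOn f Ω :=
  stmt_10_general Ω hΩ f hconv hlsc
end

section
/- Let $V$ be a locally convex space, $C \subseteq V'$ a nonempty weak-*-closed convex set, and $x \in B(C)$ a point such that the support function $s_C(v) = -\inf\langle C, v\rangle$ is bounded on some neighborhood of $x$. Then for every $m \in \mathbb{R}$ the set $C_m = \{\alpha \in C : \alpha(x) \leq m\}$ is equicontinuous and weak-*-compact. -/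
/-!
A bound `-M ≤ α` on a neighbourhood `U` of `x`, together with `α x ≤ m`, bounds `|α|` by `1` on
the symmetric neighbourhood `{u | x ± c • u ∈ U}` of `0` for `c > M + m`; so `C_m` lies in the
polar of a neighbourhood of `0`. That polar is weak-* compact (Banach–Alaoglu): its image in
`V → ℝ` is closed, since pointwise limits of linear maps are linear and a linear functional bounded
on a neighbourhood of `0` is continuous, and it lies in a product of compact intervals, since
neighbourhoods of `0` are absorbent. `C_m` is a closed subset of it.
-/

open Filter Topology

section

variable {𝕜 E : Type*} [NontriviallyNormedField 𝕜] [AddCommGroup E] [TopologicalSpace E]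
  [Module 𝕜 E]

theorem LinearMap.continuous_of_mem_nhds_zero_of_norm_le_one [IsTopologicalAddGroup E]
    [ContinuousConstSMul 𝕜 E] (f : E →ₗ[𝕜] 𝕜) {W : Set E} (hW : W ∈ 𝓝 0)
    (hf : ∀ u ∈ W, ‖f u‖ ≤ 1) : Continuous f := by
  have hp : Continuous ((normSeminorm 𝕜 𝕜).comp f) :=
    Seminorm.continuous' (r := 1) (mem_of_superset hW fun u hu => by simpa using hf u hu)
  refine continuous_of_continuousAt_zero f ?_
  rw [ContinuousAt, map_zero, tendsto_zero_iff_norm_tendsto_zero]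
  simpa [Seminorm.coe_comp, Function.comp_def] using hp.tendsto 0

namespace WeakDual

theorem exists_forall_norm_apply_le_of_mem_polar [ContinuousSMul 𝕜 E] {W : Set E}
    (hW : W ∈ 𝓝 0) (v : E) : ∃ r, ∀ f ∈ polar 𝕜 W, ‖f v‖ ≤ r := by
  obtain ⟨r, -, hr⟩ := (absorbent_nhds_zero (𝕜 := 𝕜) hW v).exists_pos
  obtain ⟨c, hc⟩ := NormedField.exists_lt_norm 𝕜 r
  obtain ⟨u, hu, rfl⟩ := hr c hc.le rfl
  exact ⟨‖c‖, fun f hf => by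
    simpa [norm_mul] using mul_le_of_le_one_right (norm_nonneg c) (hf u hu)⟩

theorem image_coe_polar [IsTopologicalAddGroup E] [ContinuousConstSMul 𝕜 E] {W : Set E}
    (hW : W ∈ 𝓝 0) :
    ((↑) : WeakDual 𝕜 E → E → 𝕜) '' polar 𝕜 W =
      Set.range ((↑) : (E →ₗ[𝕜] 𝕜) → E → 𝕜) ∩ {g | ∀ u ∈ W, ‖g u‖ ≤ 1} := by
  ext g
  constructor
  · rintro ⟨f, hf, rfl⟩
    exact ⟨⟨f.toLinearMap, rfl⟩, hf⟩
  · rintro ⟨⟨f, rfl⟩, hf⟩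
    exact ⟨⟨f, f.continuous_of_mem_nhds_zero_of_norm_le_one hW hf⟩, hf, rfl⟩

theorem isCompact_polar_of_mem_nhds_zero [ProperSpace 𝕜] [IsTopologicalAddGroup E]
    [ContinuousSMul 𝕜 E] {W : Set E} (hW : W ∈ 𝓝 0) : IsCompact (polar 𝕜 W) := by
  choose r hr using exists_forall_norm_apply_le_of_mem_polar (𝕜 := 𝕜) hW
  have hclosed : IsClosed (((↑) : WeakDual 𝕜 E → E → 𝕜) '' polar 𝕜 W) := by
    rw [image_coe_polar hW]
    refine (LinearMap.isClosed_range_coe E 𝕜 (RingHom.id 𝕜)).inter ?_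
    simp only [Set.ofPred_forall]
    exact isClosed_biInter fun u _ => isClosed_le (continuous_apply u).norm continuous_const
  have hbox : ((↑) : WeakDual 𝕜 E → E → 𝕜) '' polar 𝕜 W ⊆
      Set.univ.pi fun v => Metric.closedBall 0 (r v) := by
    rintro _ ⟨f, hf, rfl⟩ v -
    simpa using hr v f hf
  refine (WeakBilin.isEmbedding ContinuousLinearMap.coe_injective).isCompact_iff.2 ?_
  exact (isCompact_univ_pi fun v => ProperSpace.isCompact_closedBall (0 : 𝕜) (r v))
    |>.of_isClosed_subset hclosed hbox

theorem exists_subset_polar_of_bddBelow_on_nhds {V : Type*} [AddCommGroup V] [Module ℝ V]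
    [TopologicalSpace V] [IsTopologicalAddGroup V] [ContinuousSMul ℝ V]
    {S : Set (WeakDual ℝ V)} {x : V} {U : Set V} (hU : U ∈ 𝓝 x) {M m : ℝ}
    (hM : ∀ v ∈ U, ∀ α ∈ S, -M ≤ α v) (hm : ∀ α ∈ S, α x ≤ m) :
    ∃ W ∈ 𝓝 (0 : V), S ⊆ polar ℝ W := by
  have hline : ∀ s : ℝ, (fun u : V => x + s • u) ⁻¹' U ∈ 𝓝 0 := fun s =>
    (by fun_prop : Continuous fun u : V => x + s • u).continuousAt.preimage_mem_nhds
      (by simpa using hU)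
  set c := |M + m| + 1
  refine ⟨_, inter_mem (hline c) (hline (-c)), fun α hα u ⟨hu₁, hu₂⟩ => ?_⟩
  have h₁ := hM _ hu₁ α hα
  have h₂ := hM _ hu₂ α hα
  simp only [map_add, map_smul, smul_eq_mul] at h₁ h₂
  have hαx := hm α hα
  have hc : M + m < c := by linarith [le_abs_self (M + m)]
  change ‖α u‖ ≤ 1
  rw [Real.norm_eq_abs, abs_le]
  constructor <;> nlinarith

end WeakDual

end

theorem stmt_11_general {V : Type*} [AddCommGroup V] [Module ℝ V] [TopologicalSpace V]
    [IsTopologicalAddGroup V] [ContinuousSMul ℝ V]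
    (C : Set (WeakDual ℝ V)) (hcl : IsClosed C)
    (x : V)
    (hbdd : ∃ U ∈ nhds x, ∃ M : ℝ, ∀ v ∈ U, ∀ α ∈ C, -M ≤ α v) :
    ∀ m : ℝ,
      (∃ U ∈ nhds (0 : V), ∀ α ∈ {α ∈ C | α x ≤ m}, ∀ u ∈ U, |α u| ≤ 1) ∧
      IsCompact {α ∈ C | α x ≤ m} := by
  obtain ⟨U, hU, M, hM⟩ := hbdd
  intro m
  obtain ⟨W, hW, hpolar⟩ := WeakDual.exists_subset_polar_of_bddBelow_on_nhds
    (S := {α ∈ C | α x ≤ m}) hU (fun v hv α hα => hM v hv α hα.1) fun α hα => hα.2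
  refine ⟨⟨W, hW, fun α hα u hu => ?_⟩, ?_⟩
  · simpa using hpolar hα u hu
  · exact (WeakDual.isCompact_polar_of_mem_nhds_zero hW).of_isClosed_subset
      (hcl.inter (isClosed_le (WeakDual.eval_continuous x) continuous_const)) hpolar

/-- If the support function `s_C(v) = -inf ⟨C, v⟩` of a nonempty weak-*-closed
convex set `C ⊆ V'` is bounded on a neighborhood of `x ∈ B(C)`, then every
sublevel set `C_m = {α ∈ C | α(x) ≤ m}` is equicontinuous and weak-*-compact. -/
theorem stmt_11 {V : Type*} [AddCommGroup V] [Module ℝ V] [TopologicalSpace V]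
    [IsTopologicalAddGroup V] [ContinuousSMul ℝ V] [LocallyConvexSpace ℝ V]
    (C : Set (WeakDual ℝ V)) (hne : C.Nonempty) (hcl : IsClosed C) (hconv : Convex ℝ C)
    (x : V) (hx : BddBelow ((fun β : WeakDual ℝ V => β x) '' C))
    (hbdd : ∃ U ∈ nhds x, ∃ M : ℝ, ∀ v ∈ U, ∀ α ∈ C, -M ≤ α v) :
    ∀ m : ℝ,
      (∃ U ∈ nhds (0 : V), ∀ α ∈ {α ∈ C | α x ≤ m}, ∀ u ∈ U, |α u| ≤ 1) ∧
      IsCompact {α ∈ C | α x ≤ m} :=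
  stmt_11_general C hcl x hbdd
end

section
/- Let $V$ be a locally convex space, $C \subseteq V'$ a nonempty weak-*-closed convex set, and suppose there is $x \in V$ such that the support function $s_C$ is bounded on a neighborhood of $x$. Then $C$ is locally compact in the weak-* topology, and there exists an extreme point $\alpha$ of $C$ with $\alpha(x) = \min\{\beta(x) : \beta \in C\}$. -/
/-!
If `-M ≤ α` on `U ∋ x` and `α x ≤ m`, then `|α| ≤ M + m` on the neighbourhood
`W = {w | x ± w ∈ U}` of `0`. As in the Banach–Alaoglu theorem, such functionals form a
weak-* compact set: pointwise limits of them are linear and bounded near `0`, hence continuous,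
and they lie in a product of compact balls. So the sublevel sets `{α ∈ C | α x ≤ m}` are
compact; they are neighbourhoods in `C` of their points with `α x < m`, which gives local
compactness, and evaluation at `x` attains its minimum on one of them. The minimisers form a
compact exposed face of `C`; an extreme point of this face, which exists by Krein–Milman, is an
extreme point of `C`.
-/

open Set Topology Filter

section

variable {𝕜 E : Type*} [NontriviallyNormedField 𝕜] [AddCommGroup E] [Module 𝕜 E]
  [TopologicalSpace E] [ContinuousSMul 𝕜 E]
  {s : Set E} {r : ℝ}

theorem LinearMap.exists_norm_le_of_forall_norm_le (hs : s ∈ 𝓝 0) (v : E) :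
    ∃ B, ∀ f : E →ₗ[𝕜] 𝕜, (∀ w ∈ s, ‖f w‖ ≤ r) → ‖f v‖ ≤ B := by
  obtain ⟨c, hcs, hc⟩ :=
    (((absorbent_nhds_zero (𝕜 := 𝕜) hs).eventually_nhdsNE_zero v).and
      self_mem_nhdsWithin).exists
  refine ⟨r / ‖c‖, fun f hf => ?_⟩
  have hcv := hf _ hcs
  rw [map_smul, smul_eq_mul, norm_mul] at hcv
  rwa [le_div_iff₀' (norm_pos_iff.mpr hc)]

variable [IsTopologicalAddGroup E]

theorem LinearMap.continuous_of_forall_norm_le (f : E →ₗ[𝕜] 𝕜) (hs : s ∈ 𝓝 0)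
    (hf : ∀ x ∈ s, ‖f x‖ ≤ r) : Continuous f := by
  have hp : Continuous ((normSeminorm 𝕜 𝕜).comp f) :=
    Seminorm.continuous' (r := r) <| mem_of_superset hs fun x hx => by simpa using hf x hx
  refine continuous_of_continuousAt_zero f ?_
  rw [ContinuousAt, map_zero, tendsto_zero_iff_norm_tendsto_zero]
  simpa [Seminorm.coe_comp, Function.comp_def] using hp.tendsto 0

theorem WeakDual.isCompact_setOfPred_forall_norm_le [ProperSpace 𝕜] (hs : s ∈ 𝓝 0) (r : ℝ) :
    IsCompact {α : WeakDual 𝕜 E | ∀ w ∈ s, ‖α w‖ ≤ r} := by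
  refine DFunLike.coe_injective.isEmbedding_induced.isCompact_iff.mpr ?_
  set T := ((↑) : WeakDual 𝕜 E → E → 𝕜) '' {α | ∀ w ∈ s, ‖α w‖ ≤ r}
  have hT : T = range ((↑) : (E →ₗ[𝕜] 𝕜) → E → 𝕜) ∩ {f | ∀ w ∈ s, ‖f w‖ ≤ r} := by
    ext f
    constructor
    · rintro ⟨α, hα, rfl⟩
      exact ⟨⟨α.toLinearMap, rfl⟩, hα⟩
    · rintro ⟨⟨g, rfl⟩, hg⟩
      exact ⟨⟨g, g.continuous_of_forall_norm_le hs hg⟩, hg, rfl⟩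
  have hclosed : IsClosed T := by
    rw [hT]
    refine (LinearMap.isClosed_range_coe E 𝕜 (RingHom.id 𝕜)).inter ?_
    simp only [ofPred_forall]
    exact isClosed_biInter fun w _ => isClosed_le (continuous_apply w).norm continuous_const
  choose B hB using fun v => LinearMap.exists_norm_le_of_forall_norm_le (𝕜 := 𝕜) (r := r) hs v
  have hbdd : T ⊆ univ.pi fun v => Metric.closedBall 0 (B v) := by
    rintro _ ⟨α, hα, rfl⟩ v -
    exact mem_closedBall_zero_iff.mpr (hB v α.toLinearMap hα)
  exact (isCompact_univ_pi fun v => ProperSpace.isCompact_closedBall 0 (B v)).of_isClosed_subset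
    hclosed hbdd

end

theorem weaklyLocallyCompactSpace_of_isCompact_setOfPred_le {X : Type*} [TopologicalSpace X]
    {s : Set X} {f : X → ℝ} (hf : Continuous f) (hs : ∀ m, IsCompact {x ∈ s | f x ≤ m}) :
    WeaklyLocallyCompactSpace s := by
  refine ⟨fun a => ⟨{b | f b ≤ f a + 1}, ?_, ?_⟩⟩
  · rw [Subtype.isCompact_iff]
    simpa [Set.image, and_comm] using hs (f a + 1)
  · exact mem_of_superset ((isOpen_lt (hf.comp continuous_subtype_val) continuous_const).mem_nhds
      (lt_add_one (f a))) fun b (hb : f b < f a + 1) => hb.le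

theorem exists_mem_extremePoints_isMinOn {E : Type*} [AddCommGroup E] [Module ℝ E]
    [TopologicalSpace E] [T2Space E] [IsTopologicalAddGroup E] [ContinuousSMul ℝ E]
    [LocallyConvexSpace ℝ E] (l : StrongDual ℝ E) {C : Set E} (hC : IsClosed C) {c : E}
    (hc : c ∈ C) (hK : IsCompact {y ∈ C | l y ≤ l c}) :
    ∃ a ∈ C.extremePoints ℝ, IsMinOn l C a := by
  obtain ⟨a, ⟨haC, hac⟩, ha⟩ := hK.exists_isMinOn ⟨c, hc, le_rfl⟩ l.continuous.continuousOn
  have hmin : IsMinOn l C a := fun y hy =>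
    (le_total (l y) (l c)).elim (fun hyc => ha ⟨hy, hyc⟩) (hac.trans ·)
  set F := (-l).toExposed C
  have hF : IsExposed ℝ C F := ContinuousLinearMap.toExposed.isExposed
  have mem_F : ∀ b, b ∈ F ↔ b ∈ C ∧ IsMinOn l C b := fun b => by
    simp [F, ContinuousLinearMap.toExposed, isMinOn_iff]
  have hFK : F ⊆ {y ∈ C | l y ≤ l c} := fun b hb =>
    ⟨((mem_F b).1 hb).1, ((mem_F b).1 hb).2 hc⟩
  obtain ⟨e, he⟩ := (hK.of_isClosed_subset (hF.isClosed hC) hFK).extremePoints_nonempty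
    ⟨a, (mem_F a).2 ⟨haC, hmin⟩⟩
  exact ⟨e, hF.isExtreme.extremePoints_subset_extremePoints he, ((mem_F e).1 he.1).2⟩

theorem WeakDual.isCompact_setOfPred_eval_le {V : Type*} [AddCommGroup V] [Module ℝ V]
    [TopologicalSpace V] [IsTopologicalAddGroup V] [ContinuousSMul ℝ V]
    {C : Set (WeakDual ℝ V)} (hC : IsClosed C) {x : V} {U : Set V} (hU : U ∈ 𝓝 x) {M : ℝ}
    (hM : ∀ v ∈ U, ∀ α ∈ C, -M ≤ α v) (m : ℝ) : IsCompact {α ∈ C | α x ≤ m} := by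
  set W := {w : V | x + w ∈ U ∧ x - w ∈ U}
  have hW : W ∈ 𝓝 0 := by
    refine inter_mem ?_ ?_
    · exact (continuous_const.add continuous_id).tendsto' 0 x (add_zero x) hU
    · exact (continuous_const.sub continuous_id).tendsto' 0 x (sub_zero x) hU
  refine (WeakDual.isCompact_setOfPred_forall_norm_le hW (M + m)).of_isClosed_subset
    (hC.inter (isClosed_le (eval_continuous x) continuous_const)) ?_
  rintro α ⟨hαC, hαx⟩ w ⟨hw₁, hw₂⟩
  have h₁ := hM _ hw₁ α hαC
  have h₂ := hM _ hw₂ α hαC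
  rw [map_add] at h₁
  rw [map_sub] at h₂
  rw [Real.norm_eq_abs, abs_le]
  constructor <;> linarith

theorem stmt_12_general {V : Type*} [AddCommGroup V] [Module ℝ V] [TopologicalSpace V]
    [IsTopologicalAddGroup V] [ContinuousSMul ℝ V]
    (C : Set (WeakDual ℝ V)) (hne : C.Nonempty) (hcl : IsClosed C)
    (x : V)
    (hbdd : ∃ U ∈ nhds x, ∃ M : ℝ, ∀ v ∈ U, ∀ α ∈ C, -M ≤ α v) :
    LocallyCompactSpace C ∧
    ∃ α ∈ Set.extremePoints ℝ C, ∀ β ∈ C, α x ≤ β x := by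
  obtain ⟨U, hU, M, hM⟩ := hbdd
  have hK := WeakDual.isCompact_setOfPred_eval_le hcl hU hM
  have : WeaklyLocallyCompactSpace C :=
    weaklyLocallyCompactSpace_of_isCompact_setOfPred_le (WeakDual.eval_continuous x) hK
  have : LocallyConvexSpace ℝ (WeakDual ℝ V) := WeakBilin.locallyConvexSpace
  obtain ⟨β, hβ⟩ := hne
  -- The ascription makes `evalₓ` carry the topology of `WeakDual`, not that of `WeakBilin`.
  let evalₓ : StrongDual ℝ (WeakDual ℝ V) := WeakBilin.eval (topDualPairing ℝ V) x
  obtain ⟨α, hα, hmin⟩ := exists_mem_extremePoints_isMinOn evalₓ hcl hβ (hK (β x))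
  exact ⟨inferInstance, α, hα, hmin⟩

/-- If the support function of a nonempty weak-*-closed convex set `C ⊆ V'` is
bounded on a neighborhood of some `x`, then `C` is weak-*-locally compact and
the function `α ↦ α(x)` attains its minimum on `C` at an extreme point. -/
theorem stmt_12 {V : Type*} [AddCommGroup V] [Module ℝ V] [TopologicalSpace V]
    [IsTopologicalAddGroup V] [ContinuousSMul ℝ V] [LocallyConvexSpace ℝ V]
    (C : Set (WeakDual ℝ V)) (hne : C.Nonempty) (hcl : IsClosed C) (hconv : Convex ℝ C)
    (x : V)
    (hbdd : ∃ U ∈ nhds x, ∃ M : ℝ, ∀ v ∈ U, ∀ α ∈ C, -M ≤ α v) :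
    LocallyCompactSpace C ∧
    ∃ α ∈ Set.extremePoints ℝ C, ∀ β ∈ C, α x ≤ β x :=
  stmt_12_general C hne hcl x hbdd
end

section
/- Let $\mathcal{A}$ be a unital C*-algebra and $\tau \in \mathcal{A}$ with $\tau = \tau^*$ and $\tau^2 = 1$. Write $a < b$ if $b - a = c^* c$ for some invertible $c \in \mathcal{A}$. Then $S := \{s \in \mathcal{A} : s^* \tau s < \tau\}$ is a subsemigroup of $(\mathcal{A}, \cdot)$: if $s, t \in S$ then $st \in S$. -/
/-!
Writing `b - a = c⋆c` with `c` invertible says exactly that `b - a` is strictly positive.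
The identity `τ - (st)⋆τ(st) = (τ - t⋆τt) + t⋆(τ - s⋆τs)t` exhibits the defect of `st` as a
strictly positive element plus a conjugate of a positive one, and a strictly positive element
plus a positive one is again strictly positive.
-/

theorem sub_star_mul_mul_mul_eq {R : Type*} [Ring R] [StarRing R] (τ s t : R) :
    τ - star (s * t) * τ * (s * t) =
      (τ - star t * τ * t) + star t * (τ - star s * τ * s) * t := by
  rw [star_mul]
  noncomm_ring

section

variable {A : Type*} [CStarAlgebra A] [PartialOrder A] [StarOrderedRing A]

def strictContractions (τ : A) : Subsemigroup A where
  carrier := {s | IsStrictlyPositive (τ - star s * τ * s)}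
  mul_mem' {s t} hs ht := by
    show IsStrictlyPositive (τ - star (s * t) * τ * (s * t))
    rw [sub_star_mul_mul_mul_eq]
    exact IsStrictlyPositive.add_nonneg ht (star_left_conjugate_nonneg hs.nonneg t)

theorem mem_strictContractions_iff {τ s : A} :
    s ∈ strictContractions τ ↔ ∃ c : A, IsUnit c ∧ τ - star s * τ * s = star c * c :=
  CStarAlgebra.isStrictlyPositive_iff_eq_star_mul_self

end

theorem stmt_15_general {A : Type*} [NormedRing A] [StarRing A] [CStarRing A]
    [CompleteSpace A] [NormedAlgebra ℂ A] [StarModule ℂ A]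
    (τ : A)
    (s t : A)
    (hs : ∃ c : A, IsUnit c ∧ τ - star s * τ * s = star c * c)
    (ht : ∃ c : A, IsUnit c ∧ τ - star t * τ * t = star c * c) :
    ∃ c : A, IsUnit c ∧ τ - star (s * t) * τ * (s * t) = star c * c := by
  let : CStarAlgebra A := ⟨⟩
  let := CStarAlgebra.spectralOrder A
  let := CStarAlgebra.spectralOrderedRing A
  rw [← mem_strictContractions_iff] at hs ht ⊢
  exact mul_mem hs ht

/-- Let `τ` be a self-adjoint involution in a unital C*-algebra, and write
`a < b` iff `b - a = c*c` for some invertible `c`. Then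
`S = {s | s*τs < τ}` is closed under multiplication. -/
theorem stmt_15 {A : Type*} [NormedRing A] [StarRing A] [CStarRing A]
    [CompleteSpace A] [NormedAlgebra ℂ A] [StarModule ℂ A]
    (τ : A) (hτstar : star τ = τ) (hτsq : τ * τ = 1)
    (s t : A)
    (hs : ∃ c : A, IsUnit c ∧ τ - star s * τ * s = star c * c)
    (ht : ∃ c : A, IsUnit c ∧ τ - star t * τ * t = star c * c) :
    ∃ c : A, IsUnit c ∧ τ - star (s * t) * τ * (s * t) = star c * c :=
  stmt_15_general τ s t hs ht
end
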